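/- Let V : Matrix n n ℂ be Hermitian and positive semidefinite and let c > 0 be such that -(𝓖(V) + c·V) is positive semidefinite (the condition 𝓖(V) ≤ -c·V). Then for every state ρ₀ the trajectory converges to the zero solutions of V: Re(trace(ρ_t * V)) → 0 as t → ∞. -/

import Mathlib

open Matrix ComplexOrder

attribute [local instance] Matrix.linftyOpNormedAddCommGroup Matrix.linftyOpNormedSpace

variable {n : Type*}

/-- The Heisenberg (Lindblad) generator
`𝓖(X) = -i·(X*H - H*X) + Lᴴ*X*L - (1/2)·(Lᴴ*L*X + X*Lᴴ*L)`. -/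
noncomputable def heisGen [Fintype n] [DecidableEq n] (H L X : Matrix n n ℂ) : Matrix n n ℂ :=
  -Complex.I • (X * H - H * X) + Lᴴ * X * L - (1/2 : ℂ) • (Lᴴ * L * X + X * (Lᴴ * L))

/-- The Schrödinger (predual) generator
`𝓛(ρ) = -i·(H*ρ - ρ*H) + L*ρ*Lᴴ - (1/2)·(Lᴴ*L*ρ + ρ*Lᴴ*L)`, bundled as a linear map. -/
noncomputable def schrodGenLM [Fintype n] [DecidableEq n] (H L : Matrix n n ℂ) :
    Matrix n n ℂ →ₗ[ℂ] Matrix n n ℂ :=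
  -Complex.I • (LinearMap.mulLeft ℂ H - LinearMap.mulRight ℂ H)
    + (LinearMap.mulRight ℂ Lᴴ).comp (LinearMap.mulLeft ℂ L)
    - (1/2 : ℂ) • (LinearMap.mulLeft ℂ (Lᴴ * L) + LinearMap.mulRight ℂ (Lᴴ * L))

lemma schrodGenLM_apply [Fintype n] [DecidableEq n] (H L ρ : Matrix n n ℂ) :
    schrodGenLM H L ρ =
      -Complex.I • (H * ρ - ρ * H) + L * ρ * Lᴴ - (1/2 : ℂ) • (Lᴴ * L * ρ + ρ * (Lᴴ * L)) := by
  simp [schrodGenLM, LinearMap.mulLeft, LinearMap.mulRight, mul_assoc]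

/-- The trajectory `ρ_t = exp (t • 𝓛) ρ₀`, where `𝓛` is regarded as a continuous linear
endomorphism of `Matrix n n ℂ`. -/
noncomputable def traj [Fintype n] [DecidableEq n] (H L ρ₀ : Matrix n n ℂ) (t : ℝ) :
    Matrix n n ℂ :=
  letI : TopologicalSpace (Matrix n n ℂ) := PseudoMetricSpace.toUniformSpace.toTopologicalSpace
  NormedSpace.exp (t • (LinearMap.toContinuousLinearMap (schrodGenLM H L))) ρ₀

/-!
Along a trajectory, `f t = Re tr (ρ_t V)` has derivative `Re tr (ρ_t 𝓖(V)) = -c f t - Re tr (ρ_t W)`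
with `W = -(𝓖(V) + c V)` positive semidefinite. Since `ρ_t` stays positive semidefinite, both
`Re tr (ρ_t W)` and `f t` are nonnegative, so Grönwall's inequality gives `0 ≤ f t ≤ f 0 e^{-ct}`.

Positivity of `ρ_t`: with `A = -iH - ½ LᴴL` one has `𝓛 ρ = A ρ + ρ Aᴴ + L ρ Lᴴ`, so for `s ≥ 0`
the map `1 + s 𝓛 + s² (ρ ↦ A ρ Aᴴ)` is the manifestly positive `ρ ↦ (1 + sA) ρ (1 + sA)ᴴ + s LρLᴴ`.
It agrees with `exp (s 𝓛)` to second order, hence its `k`-th power at `s = t / k` tends to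
`exp (t 𝓛)`, and positivity passes to the limit.
-/

open Filter Topology Finset NormedSpace
open scoped Nat

section BanachAlgebra

variable {𝔸 : Type*} [NormedRing 𝔸]

theorem norm_pow_succ_sub_pow_succ_le {P Q : 𝔸} {r : ℝ} (hP : ‖P‖ ≤ r) (hQ : ‖Q‖ ≤ r) (k : ℕ) :
    ‖P ^ (k + 1) - Q ^ (k + 1)‖ ≤ (k + 1) * r ^ k * ‖P - Q‖ := by
  induction k with
  | zero => simp
  | succ k ih =>
    have hr : 0 ≤ r := (norm_nonneg P).trans hP
    have hQk : ‖Q ^ (k + 1)‖ ≤ r ^ (k + 1) := (norm_pow_le' Q k.succ_pos).trans (by gcongr)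
    calc ‖P ^ (k + 1 + 1) - Q ^ (k + 1 + 1)‖
        = ‖P * (P ^ (k + 1) - Q ^ (k + 1)) + (P - Q) * Q ^ (k + 1)‖ := by
          rw [pow_succ' P, pow_succ' Q]; noncomm_ring
      _ ≤ ‖P‖ * ‖P ^ (k + 1) - Q ^ (k + 1)‖ + ‖P - Q‖ * ‖Q ^ (k + 1)‖ :=
          (norm_add_le _ _).trans (add_le_add (norm_mul_le _ _) (norm_mul_le _ _))
      _ ≤ r * ((k + 1) * r ^ k * ‖P - Q‖) + ‖P - Q‖ * r ^ (k + 1) := by gcongr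
      _ = (↑(k + 1) + 1) * r ^ (k + 1) * ‖P - Q‖ := by push_cast; ring

variable [NormedAlgebra ℝ 𝔸] [NormOneClass 𝔸] {s : ℝ}

theorem norm_one_add_smul_add_sq_smul_le (hs₀ : 0 ≤ s) (hs₁ : s ≤ 1) (x y : 𝔸) :
    ‖1 + s • x + s ^ 2 • y‖ ≤ Real.exp (s * (‖x‖ + ‖y‖)) := by
  have hsq : s ^ 2 ≤ s := by nlinarith
  calc ‖1 + s • x + s ^ 2 • y‖ ≤ ‖(1 : 𝔸)‖ + ‖s • x‖ + ‖s ^ 2 • y‖ := norm_add₃_le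
    _ ≤ 1 + s * ‖x‖ + s * ‖y‖ := by
        rw [norm_one, norm_smul, norm_smul, Real.norm_of_nonneg hs₀,
          Real.norm_of_nonneg (by positivity)]
        gcongr
    _ ≤ Real.exp (s * (‖x‖ + ‖y‖)) := by linarith [Real.add_one_le_exp (s * (‖x‖ + ‖y‖))]

variable [CompleteSpace 𝔸]

theorem NormedSpace.norm_exp_sub_sum_range_le (x : 𝔸) (N : ℕ) :
    ‖exp x - ∑ m ∈ range N, (m !⁻¹ : ℝ) • x ^ m‖ ≤ ‖x‖ ^ N * Real.exp ‖x‖ := by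
  have hx := NormedSpace.expSeries_summable' (𝕂 := ℝ) x
  have hle : ∀ m, ‖((m + N)! ⁻¹ : ℝ) • x ^ (m + N)‖ ≤ ‖x‖ ^ N * (‖x‖ ^ m / m !) := by
    intro m
    rw [norm_smul, norm_inv, Real.norm_natCast]
    calc ((m + N)! : ℝ)⁻¹ * ‖x ^ (m + N)‖ ≤ (m ! : ℝ)⁻¹ * ‖x‖ ^ (m + N) := by
          gcongr
          · exact Nat.le_add_right m N
          · exact norm_pow_le x _
      _ = ‖x‖ ^ N * (‖x‖ ^ m / m !) := by ring
  rw [exp_eq_tsum ℝ]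
  dsimp only
  rw [← hx.sum_add_tsum_nat_add N, add_sub_cancel_left, Real.exp_eq_exp_ℝ]
  exact tsum_of_norm_bounded ((NormedSpace.expSeries_div_hasSum_exp ‖x‖).mul_left _) hle

theorem NormedSpace.norm_exp_le_exp_norm (x : 𝔸) : ‖exp x‖ ≤ Real.exp ‖x‖ := by
  simpa using norm_exp_sub_sum_range_le x 0

theorem norm_one_add_smul_add_sq_smul_sub_exp_le (hs₀ : 0 ≤ s) (hs₁ : s ≤ 1) (x y : 𝔸) :
    ‖1 + s • x + s ^ 2 • y - exp (s • x)‖ ≤ s ^ 2 * (‖y‖ + ‖x‖ ^ 2 * Real.exp ‖x‖) := by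
  have hsx : ‖s • x‖ = s * ‖x‖ := by rw [norm_smul, Real.norm_of_nonneg hs₀]
  have hrem : ‖exp (s • x) - (1 + s • x)‖ ≤ (s * ‖x‖) ^ 2 * Real.exp (s * ‖x‖) := by
    simpa [sum_range_succ, hsx] using NormedSpace.norm_exp_sub_sum_range_le (s • x) 2
  calc ‖1 + s • x + s ^ 2 • y - exp (s • x)‖ = ‖s ^ 2 • y - (exp (s • x) - (1 + s • x))‖ := by
        congr 1; abel
    _ ≤ s ^ 2 * ‖y‖ + (s * ‖x‖) ^ 2 * Real.exp (s * ‖x‖) := by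
        refine (norm_sub_le _ _).trans (add_le_add ?_ hrem)
        rw [norm_smul, Real.norm_of_nonneg (by positivity)]
    _ ≤ s ^ 2 * ‖y‖ + (s * ‖x‖) ^ 2 * Real.exp ‖x‖ := by
        gcongr
        exact mul_le_of_le_one_left (norm_nonneg x) hs₁
    _ = s ^ 2 * (‖y‖ + ‖x‖ ^ 2 * Real.exp ‖x‖) := by ring

theorem tendsto_one_add_inv_smul_add_inv_sq_smul_pow (x y : 𝔸) :
    Tendsto (fun k : ℕ => (1 + (k : ℝ)⁻¹ • x + (k : ℝ)⁻¹ ^ 2 • y) ^ k) atTop (𝓝 (exp x)) := by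
  set a := ‖x‖ + ‖y‖
  set C := ‖y‖ + ‖x‖ ^ 2 * Real.exp ‖x‖
  rw [← tendsto_add_atTop_iff_nat 1, tendsto_iff_norm_sub_tendsto_zero]
  refine squeeze_zero (fun _ => norm_nonneg _) (fun k => ?_)
    (by simpa using tendsto_one_div_add_atTop_nhds_zero_nat.const_mul (Real.exp a * C))
  set s : ℝ := ((k + 1 : ℕ) : ℝ)⁻¹
  have hk : (0 : ℝ) < k + 1 := by positivity
  have hs₀ : 0 ≤ s := by positivity
  have hs₁ : s ≤ 1 := inv_le_one_of_one_le₀ (by simp)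
  have hexp : exp x = exp (s • x) ^ (k + 1) := by
    let _ : NormedAlgebra ℚ 𝔸 := .restrictScalars ℚ ℝ 𝔸
    have hks : ((k + 1 : ℕ) : ℝ) * s = 1 := mul_inv_cancel₀ (by positivity)
    rw [← NormedSpace.exp_nsmul, ← Nat.cast_smul_eq_nsmul ℝ, smul_smul, hks, one_smul]
  have hQ : ‖exp (s • x)‖ ≤ Real.exp (s * a) := by
    refine (NormedSpace.norm_exp_le_exp_norm _).trans (Real.exp_le_exp.mpr ?_)
    rw [norm_smul, Real.norm_of_nonneg hs₀]
    gcongr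
    exact le_add_of_nonneg_right (norm_nonneg y)
  have hpow : Real.exp (s * a) ^ k ≤ Real.exp a := by
    rw [← Real.exp_nat_mul, Real.exp_le_exp, ← mul_assoc]
    refine mul_le_of_le_one_left (by positivity) ?_
    simp only [s]
    rw [Nat.cast_add_one, ← div_eq_mul_inv, div_le_one hk]
    linarith
  rw [hexp]
  calc ‖(1 + s • x + s ^ 2 • y) ^ (k + 1) - exp (s • x) ^ (k + 1)‖
      ≤ (k + 1) * Real.exp (s * a) ^ k * ‖1 + s • x + s ^ 2 • y - exp (s • x)‖ :=
        norm_pow_succ_sub_pow_succ_le (norm_one_add_smul_add_sq_smul_le hs₀ hs₁ x y) hQ k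
    _ ≤ (k + 1) * Real.exp a * (s ^ 2 * C) := by
        gcongr
        exact norm_one_add_smul_add_sq_smul_sub_exp_le hs₀ hs₁ x y
    _ = Real.exp a * C * ((k : ℝ) + 1)⁻¹ := by
        simp only [s]; push_cast; field_simp

end BanachAlgebra

theorem le_mul_exp_of_hasDerivAt_le_mul {f f' : ℝ → ℝ} {K t : ℝ}
    (hf : ∀ s, HasDerivAt f (f' s) s) (bound : ∀ s, 0 ≤ s → f' s ≤ K * f s) (ht : 0 ≤ t) :
    f t ≤ f 0 * Real.exp (K * t) := by
  have h := le_gronwallBound_of_liminf_deriv_right_le (f := f) (f' := f') (δ := f 0) (K := K)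
    (ε := 0) (a := 0) (b := t) (fun s _ => (hf s).continuousAt.continuousWithinAt)
    (fun s _ r hr => (hf s).hasDerivWithinAt.liminf_right_slope_le hr) le_rfl
    (fun s hs => by simpa using bound s hs.1) t ⟨ht, le_rfl⟩
  simpa [gronwallBound_ε0] using h

section Matrix

variable [Fintype n]

theorem Matrix.isClosed_setOf_posSemidef {𝕜 : Type*} [RCLike 𝕜] :
    IsClosed {M : Matrix n n 𝕜 | M.PosSemidef} := by
  have hset : {M : Matrix n n 𝕜 | M.PosSemidef}
      = {M | Mᴴ = M} ∩ ⋂ x : n → 𝕜, {M | 0 ≤ star x ⬝ᵥ M *ᵥ x} := by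
    ext M
    simp [posSemidef_iff_dotProduct_mulVec, IsHermitian]
  rw [hset]
  exact (isClosed_eq continuous_id.matrix_conjTranspose continuous_id).inter <|
    isClosed_iInter fun x => isClosed_le continuous_const <|
      continuous_const.dotProduct (continuous_id.matrix_mulVec continuous_const)

noncomputable def lindbladDrift (H L : Matrix n n ℂ) : Matrix n n ℂ :=
  -Complex.I • H - (1/2 : ℂ) • (Lᴴ * L)

theorem lindbladDrift_conjTranspose {H : Matrix n n ℂ} (hH : H.IsHermitian) (L : Matrix n n ℂ) :
    (lindbladDrift H L)ᴴ = Complex.I • H - (1/2 : ℂ) • (Lᴴ * L) := by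
  simp [lindbladDrift, conjTranspose_sub, conjTranspose_smul, hH.eq]

variable [DecidableEq n]

theorem Matrix.PosSemidef.re_trace_mul_nonneg {ρ W : Matrix n n ℂ} (hρ : ρ.PosSemidef)
    (hW : W.PosSemidef) : 0 ≤ (ρ * W).trace.re := by
  open scoped MatrixOrder Norms.L2Operator in
  obtain ⟨B, rfl⟩ := CStarAlgebra.nonneg_iff_eq_star_mul_self.mp hW.nonneg
  rw [← mul_assoc, trace_mul_comm, ← mul_assoc]
  exact (Complex.nonneg_iff.mp (hρ.mul_mul_conjTranspose_same B).trace_nonneg).1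

theorem schrodGenLM_apply_eq_lindbladDrift {H : Matrix n n ℂ} (hH : H.IsHermitian)
    (L ρ : Matrix n n ℂ) :
    schrodGenLM H L ρ = lindbladDrift H L * ρ + ρ * (lindbladDrift H L)ᴴ + L * ρ * Lᴴ := by
  rw [lindbladDrift_conjTranspose hH, schrodGenLM_apply, lindbladDrift]
  simp only [sub_mul, mul_sub, smul_mul_assoc, mul_smul_comm, smul_add, mul_assoc]
  module

end Matrix

section Lindblad

variable [Fintype n]

-- The `linftyOp` norm induces the product topology only up to unfolding, so under the product
-- topology instance the operators on `Matrix n n ℂ` get no operator norm; `traj` uses this one.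
noncomputable abbrev matrixNormTopology : TopologicalSpace (Matrix n n ℂ) :=
  PseudoMetricSpace.toUniformSpace.toTopologicalSpace

attribute [local instance] matrixNormTopology

def posSemidefPreserving : Submonoid (Matrix n n ℂ →L[ℂ] Matrix n n ℂ) where
  carrier := {Φ | ∀ ρ, ρ.PosSemidef → (Φ ρ).PosSemidef}
  mul_mem' hΦ hΨ ρ hρ := hΦ _ (hΨ ρ hρ)
  one_mem' _ hρ := hρ

theorem mem_posSemidefPreserving {Φ : Matrix n n ℂ →L[ℂ] Matrix n n ℂ} :
    Φ ∈ posSemidefPreserving ↔ ∀ ρ, ρ.PosSemidef → (Φ ρ).PosSemidef :=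
  Iff.rfl

theorem isClosed_posSemidefPreserving :
    IsClosed (posSemidefPreserving (n := n) : Set (Matrix n n ℂ →L[ℂ] Matrix n n ℂ)) := by
  have hset : (posSemidefPreserving (n := n) : Set (Matrix n n ℂ →L[ℂ] Matrix n n ℂ))
      = ⋂ ρ ∈ {ρ : Matrix n n ℂ | ρ.PosSemidef}, (fun Φ => Φ ρ) ⁻¹' {M | M.PosSemidef} := by
    ext Φ
    simp [mem_posSemidefPreserving]
  rw [hset]
  exact isClosed_biInter fun ρ _ =>
    isClosed_setOf_posSemidef.preimage (ContinuousLinearMap.apply ℂ _ ρ).continuous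

variable [DecidableEq n]

noncomputable def schrodGenCLM (H L : Matrix n n ℂ) : Matrix n n ℂ →L[ℂ] Matrix n n ℂ :=
  LinearMap.toContinuousLinearMap (schrodGenLM H L)

noncomputable def lindbladDriftConj (H L : Matrix n n ℂ) : Matrix n n ℂ →L[ℂ] Matrix n n ℂ :=
  LinearMap.toContinuousLinearMap
    (LinearMap.mulLeftRight ℂ (lindbladDrift H L, (lindbladDrift H L)ᴴ))

theorem one_add_smul_schrodGenCLM_add_sq_smul_mem_posSemidefPreserving {H : Matrix n n ℂ}
    (hH : H.IsHermitian) (L : Matrix n n ℂ) {s : ℝ} (hs : 0 ≤ s) :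
    1 + s • schrodGenCLM H L + s ^ 2 • lindbladDriftConj H L ∈ posSemidefPreserving := by
  intro ρ hρ
  set A := lindbladDrift H L
  have hkraus : (1 + s • schrodGenCLM H L + s ^ 2 • lindbladDriftConj H L) ρ
      = (1 + (s : ℂ) • A) * ρ * (1 + (s : ℂ) • A)ᴴ + (s : ℂ) • (L * ρ * Lᴴ) := by
    change ρ + s • schrodGenLM H L ρ + s ^ 2 • (A * ρ * Aᴴ) = _
    simp only [schrodGenLM_apply_eq_lindbladDrift hH, conjTranspose_add, conjTranspose_one,
      conjTranspose_smul, Complex.star_def, Complex.conj_ofReal, add_mul, mul_add, one_mul,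
      mul_one, smul_mul_assoc, mul_smul_comm, mul_assoc]
    module
  rw [hkraus]
  exact (hρ.mul_mul_conjTranspose_same _).add
    ((hρ.mul_mul_conjTranspose_same L).smul (by exact_mod_cast hs))

theorem exp_smul_schrodGenCLM_mem_posSemidefPreserving [Nonempty n] {H : Matrix n n ℂ}
    (hH : H.IsHermitian) (L : Matrix n n ℂ) {t : ℝ} (ht : 0 ≤ t) :
    exp (t • schrodGenCLM H L) ∈ posSemidefPreserving := by
  refine isClosed_posSemidefPreserving.mem_of_tendsto
    (tendsto_one_add_inv_smul_add_inv_sq_smul_pow (t • schrodGenCLM H L)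
      (t ^ 2 • lindbladDriftConj H L)) (Eventually.of_forall fun k => pow_mem ?_ k)
  simpa only [smul_smul, ← mul_pow] using
    one_add_smul_schrodGenCLM_add_sq_smul_mem_posSemidefPreserving hH L
      (mul_nonneg (inv_nonneg.mpr k.cast_nonneg) ht)

theorem traj_posSemidef [Nonempty n] {H : Matrix n n ℂ} (hH : H.IsHermitian) (L : Matrix n n ℂ)
    {ρ₀ : Matrix n n ℂ} (hρ₀ : ρ₀.PosSemidef) {t : ℝ} (ht : 0 ≤ t) :
    (traj H L ρ₀ t).PosSemidef :=
  exp_smul_schrodGenCLM_mem_posSemidefPreserving hH L ht ρ₀ hρ₀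

theorem hasDerivAt_traj (H L ρ₀ : Matrix n n ℂ) (t : ℝ) :
    HasDerivAt (traj H L ρ₀) (schrodGenLM H L (traj H L ρ₀ t)) t :=
  (((ContinuousLinearMap.apply ℂ _ ρ₀).restrictScalars ℝ).hasFDerivAt.comp_hasDerivAt t
    (hasDerivAt_exp_smul_const' (𝕂 := ℝ) (schrodGenCLM H L) t) :)

theorem trace_schrodGenLM_mul (H L V ρ : Matrix n n ℂ) :
    (schrodGenLM H L ρ * V).trace = (ρ * heisGen H L V).trace := by
  have hH : (H * (ρ * V)).trace = (ρ * (V * H)).trace := by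
    rw [trace_mul_comm, mul_assoc]
  have hL : (L * (ρ * (Lᴴ * V))).trace = (ρ * (Lᴴ * (V * L))).trace := by
    rw [trace_mul_comm]; simp only [mul_assoc]
  have hLL : (Lᴴ * (L * (ρ * V))).trace = (ρ * (V * (Lᴴ * L))).trace := by
    rw [← mul_assoc, trace_mul_comm, mul_assoc]
  simp only [schrodGenLM_apply, heisGen, sub_mul, add_mul, mul_sub, mul_add, smul_mul_assoc,
    mul_smul_comm, trace_add, trace_sub, trace_smul, smul_eq_mul, mul_assoc]
  rw [hH, hL, hLL]
  ring

theorem hasDerivAt_re_trace_traj_mul (H L V ρ₀ : Matrix n n ℂ) (t : ℝ) :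
    HasDerivAt (fun s => (traj H L ρ₀ s * V).trace.re)
      (traj H L ρ₀ t * heisGen H L V).trace.re t := by
  let trMulV : Matrix n n ℂ →L[ℂ] ℂ :=
    LinearMap.toContinuousLinearMap (traceLinearMap n ℂ ℂ ∘ₗ LinearMap.mulRight ℂ V)
  let ψ : Matrix n n ℂ →L[ℝ] ℝ := Complex.reCLM.comp (trMulV.restrictScalars ℝ)
  rw [← trace_schrodGenLM_mul]
  exact (ψ.hasFDerivAt.comp_hasDerivAt t (hasDerivAt_traj H L ρ₀ t) :)

end Lindblad

theorem lyapunov_convergence_to_zero_solutions_general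
    [Fintype n] [DecidableEq n] [Nonempty n]
    (H L : Matrix n n ℂ) (hH : H.IsHermitian)
    (V : Matrix n n ℂ) (hVpos : V.PosSemidef)
    (c : ℝ) (hc : 0 < c)
    (hLyap : (-(heisGen H L V + (c : ℂ) • V)).PosSemidef)
    (ρ₀ : Matrix n n ℂ) (hρ₀ : ρ₀.PosSemidef) :
    Filter.Tendsto (fun t : ℝ => ((traj H L ρ₀ t * V).trace).re)
      Filter.atTop (nhds 0) := by
  set f := fun t : ℝ => ((traj H L ρ₀ t * V).trace).re
  have hbound : ∀ t, 0 ≤ t → (traj H L ρ₀ t * heisGen H L V).trace.re ≤ -c * f t := by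
    intro t ht
    have hW := (traj_posSemidef hH L hρ₀ ht).re_trace_mul_nonneg hLyap
    simp only [mul_neg, mul_add, trace_neg, trace_add, mul_smul_comm, trace_smul, smul_eq_mul,
      Complex.neg_re, Complex.add_re, Complex.re_ofReal_mul] at hW
    linarith
  have hdecay : ∀ t, 0 ≤ t → f t ≤ f 0 * Real.exp (-c * t) :=
    fun t ht => le_mul_exp_of_hasDerivAt_le_mul (hasDerivAt_re_trace_traj_mul H L V ρ₀) hbound ht
  have hlim : Tendsto (fun t => f 0 * Real.exp (-c * t)) atTop (𝓝 0) := by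
    simpa using (Real.tendsto_exp_neg_atTop_nhds_zero.comp
      (tendsto_id.const_mul_atTop hc)).const_mul (f 0)
  refine squeeze_zero' ?_ ?_ hlim
  · filter_upwards [eventually_ge_atTop 0] with t ht
    exact (traj_posSemidef hH L hρ₀ ht).re_trace_mul_nonneg hVpos
  · filter_upwards [eventually_ge_atTop 0] with t ht
    exact hdecay t ht

/-- the condition `𝓖(V) ≤ -c·V` with `c > 0` implies that every trajectory
converges to the zero solutions of `V`. -/
theorem lyapunov_convergence_to_zero_solutions
    [Fintype n] [DecidableEq n] [Nonempty n]
    (H L : Matrix n n ℂ) (hH : H.IsHermitian)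
    (V : Matrix n n ℂ) (hV : V.IsHermitian) (hVpos : V.PosSemidef)
    (c : ℝ) (hc : 0 < c)
    (hLyap : (-(heisGen H L V + (c : ℂ) • V)).PosSemidef)
    (ρ₀ : Matrix n n ℂ) (hρ₀ : ρ₀.PosSemidef) (hρ₀tr : ρ₀.trace = 1) :
    Filter.Tendsto (fun t : ℝ => ((traj H L ρ₀ t * V).trace).re)
      Filter.atTop (nhds 0) :=
  lyapunov_convergence_to_zero_solutions_general H L hH V hVpos c hc hLyap ρ₀ hρ₀
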